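/- Let G be a finite nilpotent subgroup of Sym(Ω) for a finite set Ω and let k ≥ 2. Then the k-closure G^{(k),Ω} is nilpotent, and the set of prime divisors of |G^{(k),Ω}| equals the set of prime divisors of |G|. -/

import Mathlib

/-- The `k`-closure of a subgroup `G ≤ Sym(Ω)` (Wielandt's characterization): the set of
permutations `x` such that for every `k`-tuple there is a `g ∈ G` agreeing with `x` on it. -/
def kClosure {Ω : Type*} (k : ℕ) (G : Subgroup (Equiv.Perm Ω)) : Subgroup (Equiv.Perm Ω) where
  carrier := {x | ∀ α : Fin k → Ω, ∃ g ∈ G, ∀ i, x (α i) = g (α i)}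
  one_mem' := fun α => ⟨1, G.one_mem, fun _ => rfl⟩
  mul_mem' := by
    intro x y hx hy α
    obtain ⟨g, hg, hgy⟩ := hy α
    obtain ⟨g', hg', hgx⟩ := hx (fun i => y (α i))
    refine ⟨g' * g, G.mul_mem hg' hg, fun i => ?_⟩
    simp only [Equiv.Perm.mul_apply]
    rw [hgx i, hgy i]
  inv_mem' := by
    intro x hx α
    obtain ⟨g, hg, hgx⟩ := hx (fun i => x⁻¹ (α i))
    refine ⟨g⁻¹, G.inv_mem hg, fun i => ?_⟩
    have h := hgx i
    simp only [Equiv.Perm.coe_inv, Equiv.apply_symm_apply] at h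
    exact Equiv.Perm.eq_inv_iff_eq.mpr h.symm

/-- A finite group is totally `k`-closed if the image of every faithful permutation
representation on a finite set equals its own `k`-closure. -/
def IsTotallyKClosed (k : ℕ) (G : Type*) [Group G] : Prop :=
  ∀ (Ω : Type) [Fintype Ω] (φ : G →* Equiv.Perm Ω), Function.Injective φ →
    kClosure k φ.range = φ.range

/-!
Since `G ≤ G^{(k)} ≤ G^{(2)}`, it suffices to treat `k = 2`, by induction on `|Ω|`. If `W` is
normalized by `G`, every element of `G^{(2)}` maps `W`-orbits to `W`-orbits, so `G^{(2)}` acts on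
`Ω / W` through the 2-closure of the image of `G`, to which the induction hypothesis applies.

If `G` is a `p`-group, take `W = Z(G)`. Elements of `G^{(2)}` commute with `Z(G)`, so an element
fixing every `W`-orbit agrees on each orbit with an element of `W`, and has `p`-power order; hence
`G^{(2)}` is a `p`-group. Otherwise take Sylow subgroups `P`, `Q` of `G` for distinct primes. An
element fixing every `P`-orbit and every `Q`-orbit is trivial, since `u • a = v • a` with `u ∈ P`,
`v ∈ Q` commuting of coprime orders forces `u • a = a`; so `G^{(2)}` embeds into the product of
the 2-closures on `Ω / P` and `Ω / Q`.
-/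

open Equiv MulAction Subgroup

section

variable {Ω : Type*}

theorem Subgroup.le_normalizer_map_subtype {K : Type*} [Group K] {H : Subgroup K} (N : Subgroup H)
    [N.Normal] : H ≤ normalizer (N.map H.subtype : Set K) := by
  simpa [N.normalizer_eq_top, ← MonoidHom.range_eq_map] using le_normalizer_map (H := N) H.subtype

section KClosure

variable {G : Subgroup (Perm Ω)} {x : Perm Ω}

theorem le_kClosure (k : ℕ) (G : Subgroup (Perm Ω)) : G ≤ kClosure k G :=
  fun g hg _ => ⟨g, hg, fun _ => rfl⟩

theorem kClosure_antitone (G : Subgroup (Perm Ω)) : Antitone (kClosure · G) := by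
  intro k m hkm x hx α
  rcases k.eq_zero_or_pos with rfl | hk
  · exact ⟨1, G.one_mem, finZeroElim⟩
  obtain ⟨g, hg, h⟩ := hx fun i => α ⟨min i (k - 1), by omega⟩
  refine ⟨g, hg, fun i => ?_⟩
  simpa [Nat.min_eq_left (Nat.le_sub_one_of_lt i.2)] using h ⟨i, by omega⟩

theorem kClosure_bot {k : ℕ} (hk : 0 < k) : kClosure k (⊥ : Subgroup (Perm Ω)) = ⊥ := by
  refine le_antisymm (fun x hx => ?_) (le_kClosure k ⊥)
  rw [mem_bot]
  ext a
  obtain ⟨g, hg, h⟩ := hx fun _ => a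
  simpa [mem_bot.mp hg] using h ⟨0, hk⟩

theorem mem_kClosure_two_iff :
    x ∈ kClosure 2 G ↔ ∀ a b, ∃ g ∈ G, x a = g a ∧ x b = g b := by
  refine ⟨fun hx a b => ?_, fun hx α => ?_⟩
  · obtain ⟨g, hg, h⟩ := hx ![a, b]
    exact ⟨g, hg, h 0, h 1⟩
  · obtain ⟨g, hg, h0, h1⟩ := hx (α 0) (α 1)
    exact ⟨g, hg, Fin.forall_fin_two.mpr ⟨h0, h1⟩⟩

theorem kClosure_two_le_centralizer_centralizer :
    kClosure 2 G ≤ centralizer (centralizer (G : Set (Perm Ω)) : Set (Perm Ω)) := by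
  intro x hx
  rw [mem_centralizer_iff]
  intro z hz
  ext a
  obtain ⟨g, hg, hga, hgz⟩ := mem_kClosure_two_iff.mp hx a (z a)
  have hzg : z * g = g * z := (mem_centralizer_iff.mp hz g hg).symm
  calc z (x a) = z (g a) := by rw [hga]
    _ = g (z a) := by rw [← Perm.mul_apply, hzg, Perm.mul_apply]
    _ = x (z a) := hgz.symm

end KClosure

namespace Setoid

variable (s : Setoid Ω)

def permStabilizer : Subgroup (Perm Ω) where
  carrier := {x | ∀ a b, s a b ↔ s (x a) (x b)}
  one_mem' _ _ := Iff.rfl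
  mul_mem' hx hy a b := (hy a b).trans (hx _ _)
  inv_mem' {x} hx a b := by simpa using (hx (x⁻¹ a) (x⁻¹ b)).symm

def quotientPerm : s.permStabilizer →* Perm (Quotient s) where
  toFun x := Quotient.congr x x.2
  map_one' := Equiv.ext fun q => Quotient.inductionOn q fun _ => rfl
  map_mul' _ _ := Equiv.ext fun q => Quotient.inductionOn q fun _ => rfl

@[simp]
theorem quotientPerm_mk (x : s.permStabilizer) (a : Ω) :
    s.quotientPerm x ⟦a⟧ = ⟦(x : Perm Ω) a⟧ :=
  rfl

theorem quotientPerm_eq_one_iff {x : s.permStabilizer} :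
    s.quotientPerm x = 1 ↔ ∀ a, s ((x : Perm Ω) a) a := by
  refine ⟨fun h a => Quotient.exact (by simpa using congr($h ⟦a⟧)), fun h => ?_⟩
  ext q
  induction q using Quotient.inductionOn with
  | h a => simpa using Quotient.sound (h a)

variable {s} {G : Subgroup (Perm Ω)}

def inducedGroup (hG : G ≤ s.permStabilizer) : Subgroup (Perm (Quotient s)) :=
  (s.quotientPerm.comp (inclusion hG)).range

theorem quotientPerm_mem_kClosure {k : ℕ} (hG : G ≤ s.permStabilizer) {x : s.permStabilizer}
    (hx : (x : Perm Ω) ∈ kClosure k G) : s.quotientPerm x ∈ kClosure k (inducedGroup hG) := by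
  intro α
  obtain ⟨g, hg, h⟩ := hx fun i => (α i).out
  refine ⟨_, ⟨⟨g, hg⟩, rfl⟩, fun i => ?_⟩
  rw [← (α i).out_eq]
  exact congrArg _ (h i)

def kClosureHom {k : ℕ} (hG : kClosure k G ≤ s.permStabilizer) :
    kClosure k G →* kClosure k (inducedGroup ((le_kClosure k G).trans hG)) :=
  (s.quotientPerm.comp (inclusion hG)).codRestrict _ fun x => quotientPerm_mem_kClosure _ x.2

theorem kClosureHom_eq_one_iff {k : ℕ} (hG : kClosure k G ≤ s.permStabilizer)
    {x : kClosure k G} : kClosureHom hG x = 1 ↔ ∀ a, s ((x : Perm Ω) a) a := by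
  rw [← Subtype.coe_inj]
  exact quotientPerm_eq_one_iff s

end Setoid

section Orbits

variable {W : Subgroup (Perm Ω)}

theorem orbitRel_perm_iff {a b : Ω} : orbitRel W Ω b a ↔ ∃ w ∈ W, w a = b := by
  simp [orbitRel_apply, mem_orbit_iff, Subgroup.smul_def, Perm.smul_def]

theorem card_orbitRel_quotient_lt [Finite Ω] (hW : W ≠ ⊥) :
    Nat.card (orbitRel.Quotient W Ω) < Nat.card Ω := by
  obtain ⟨⟨w, hwW⟩, hw⟩ := W.ne_bot_iff_exists_ne_one.mp hW
  obtain ⟨a, ha⟩ : ∃ a, w a ≠ a := by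
    by_contra! h
    exact hw (Subtype.ext (Equiv.ext h))
  have hsurj : Function.Surjective (Quotient.mk (orbitRel W Ω)) := Quotient.mk_surjective
  refine (Nat.card_le_card_of_surjective _ hsurj).lt_of_ne fun hcard => ha ?_
  exact (hsurj.bijective_of_nat_card_le hcard.ge).1
    (Quotient.sound (orbitRel_perm_iff.mpr ⟨w, hwW, rfl⟩))

variable {G : Subgroup (Perm Ω)}

theorem kClosure_two_le_permStabilizer_orbitRel (hW : G ≤ normalizer (W : Set (Perm Ω))) :
    kClosure 2 G ≤ (orbitRel W Ω).permStabilizer := by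
  have key : ∀ x ∈ kClosure 2 G, ∀ a b, orbitRel W Ω a b → orbitRel W Ω (x a) (x b) := by
    intro x hx a b hab
    obtain ⟨w, hwW, rfl⟩ := orbitRel_perm_iff.mp hab
    obtain ⟨g, hg, hga, hgb⟩ := mem_kClosure_two_iff.mp hx (w b) b
    refine orbitRel_perm_iff.mpr ⟨g * w * g⁻¹, (mem_normalizer_iff.mp (hW hg) w).mp hwW, ?_⟩
    simp [hga, hgb]
  intro x hx a b
  refine ⟨key x hx a b, fun h => ?_⟩
  simpa using key x⁻¹ (inv_mem hx) _ _ h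

abbrev orbitGroup (hW : G ≤ normalizer (W : Set (Perm Ω))) :
    Subgroup (Perm (orbitRel.Quotient W Ω)) :=
  Setoid.inducedGroup ((le_kClosure 2 G).trans (kClosure_two_le_permStabilizer_orbitRel hW))

abbrev orbitsHom (hW : G ≤ normalizer (W : Set (Perm Ω))) :
    kClosure 2 G →* kClosure 2 (orbitGroup hW) :=
  Setoid.kClosureHom (kClosure_two_le_permStabilizer_orbitRel hW)

theorem orbitsHom_eq_one_iff (hW : G ≤ normalizer (W : Set (Perm Ω))) {x : kClosure 2 G} :
    orbitsHom hW x = 1 ↔ ∀ a, ∃ w ∈ W, w a = (x : Perm Ω) a := by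
  simp only [Setoid.kClosureHom_eq_one_iff, orbitRel_perm_iff]

end Orbits

namespace MulAction

variable {M α : Type*} [Group M] [MulAction M α] {a : α}

theorem pow_smul_eq_pow_smul_of_commute {x w : M} (hxw : Commute x w) (h : x • a = w • a)
    (n : ℕ) : x ^ n • a = w ^ n • a := by
  have hd : w⁻¹ * x ∈ stabilizer M a := by simp [mem_stabilizer_iff, mul_smul, h]
  have hwd : Commute w (w⁻¹ * x) := (Commute.refl w).inv_right.mul_right hxw.symm
  calc x ^ n • a = (w * (w⁻¹ * x)) ^ n • a := by rw [mul_inv_cancel_left]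
    _ = w ^ n • a := by rw [hwd.mul_pow, mul_smul, (pow_mem hd n : _ ∈ stabilizer M a)]

theorem smul_eq_self_of_smul_eq_smul_of_coprime {u v : M} (huv : Commute u v)
    (hcop : (orderOf u).Coprime (orderOf v)) (h : u • a = v • a) : u • a = a := by
  have hc : u⁻¹ * v ∈ stabilizer M a := by simp [mem_stabilizer_iff, mul_smul, ← h]
  obtain ⟨m, hm⟩ := exists_pow_eq_self_of_coprime (x := u⁻¹) (n := orderOf v)
    (by rw [orderOf_inv]; exact hcop.symm)
  have hpow : (u⁻¹ * v) ^ orderOf v = u⁻¹ ^ orderOf v := by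
    rw [huv.inv_left.mul_pow, pow_orderOf_eq_one, mul_one]
  have hu : u⁻¹ ∈ stabilizer M a := hm ▸ hpow ▸ pow_mem (pow_mem hc _) m
  exact eq_inv_smul_iff.mp (mem_stabilizer_iff.mp hu).symm

end MulAction

section Kernels

variable {W : Subgroup (Perm Ω)} {x : Perm Ω}

theorem pow_eq_one_of_forall_exists_apply_eq {n : ℕ} (hxW : ∀ w ∈ W, Commute x w)
    (hWn : ∀ w ∈ W, w ^ n = 1) (hx : ∀ a, ∃ w ∈ W, w a = x a) : x ^ n = 1 := by
  ext a
  obtain ⟨w, hw, hwa⟩ := hx a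
  simpa [hWn w hw, Perm.smul_def] using
    pow_smul_eq_pow_smul_of_commute (hxW w hw) (a := a) (by simpa [Perm.smul_def] using hwa.symm) n

theorem eq_one_of_forall_exists_apply_eq_of_coprime {V : Subgroup (Perm Ω)}
    (hWV : ∀ w ∈ W, ∀ v ∈ V, Commute w v) (hcop : (Nat.card W).Coprime (Nat.card V))
    (hW : ∀ a, ∃ w ∈ W, w a = x a) (hV : ∀ a, ∃ v ∈ V, v a = x a) : x = 1 := by
  ext a
  obtain ⟨w, hw, hwa⟩ := hW a
  obtain ⟨v, hv, hva⟩ := hV a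
  have hord : (orderOf w).Coprime (orderOf v) :=
    (hcop.coprime_dvd_left (W.orderOf_dvd_natCard hw)).coprime_dvd_right (V.orderOf_dvd_natCard hv)
  rw [← hwa]
  simpa [Perm.smul_def] using
    smul_eq_self_of_smul_eq_smul_of_coprime (hWV w hw v hv) hord (a := a)
      (by simpa [Perm.smul_def] using hwa.trans hva.symm)

end Kernels

section Reductions

variable {G W : Subgroup (Perm Ω)}

theorem primeFactors_card_kClosure_two_subset_union [Finite Ω]
    (hW : G ≤ centralizer (W : Set (Perm Ω))) :
    (Nat.card (kClosure 2 G)).primeFactors ⊆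
      (Nat.card (kClosure 2 (orbitGroup (hW.trans (centralizer_le_normalizer _))))).primeFactors ∪
        (Nat.card W).primeFactors := by
  set hN := hW.trans (centralizer_le_normalizer _)
  set c := Nat.card (kClosure 2 (orbitGroup hN))
  -- `IsPGroup n H` only asks every element to have order dividing a power of `n`
  have hexp : IsPGroup (c * Nat.card W) (kClosure 2 G) := by
    intro x
    refine ⟨1, Subtype.ext ?_⟩
    have hker : orbitsHom hN (x ^ c) = 1 := by rw [map_pow, pow_card_eq_one']
    rw [orbitsHom_eq_one_iff] at hker
    rw [pow_one, pow_mul]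
    refine pow_eq_one_of_forall_exists_apply_eq (fun w hw => ?_)
      (fun w hw => orderOf_dvd_iff_pow_eq_one.mp (W.orderOf_dvd_natCard hw)) hker
    have hwG : w ∈ centralizer (G : Set (Perm Ω)) := le_centralizer_iff.mp hW hw
    exact (mem_centralizer_iff.mp (kClosure_two_le_centralizer_centralizer (x ^ c).2) w hwG).symm
  rwa [isPGroup_iff_primeFactors_card_subset (mul_ne_zero Nat.card_pos.ne' Nat.card_pos.ne'),
    Nat.primeFactors_mul Nat.card_pos.ne' Nat.card_pos.ne'] at hexp

theorem injective_orbitsHom_prod {V : Subgroup (Perm Ω)}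
    (hW : G ≤ normalizer (W : Set (Perm Ω))) (hV : G ≤ normalizer (V : Set (Perm Ω)))
    (hWV : ∀ w ∈ W, ∀ v ∈ V, Commute w v)
    (hcop : (Nat.card W).Coprime (Nat.card V)) :
    Function.Injective ((orbitsHom hW).prod (orbitsHom hV)) := by
  rw [injective_iff_map_eq_one]
  intro x hx
  rw [MonoidHom.prod_apply, Prod.mk_eq_one, orbitsHom_eq_one_iff, orbitsHom_eq_one_iff] at hx
  exact Subtype.ext (eq_one_of_forall_exists_apply_eq_of_coprime hWV hcop hx.1 hx.2)

theorem primeFactors_card_kClosure_two_subset_of_center [Finite Ω]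
    (hΩ : (Nat.card (kClosure 2 (orbitGroup (le_normalizer_map_subtype (center G))))).primeFactors
      ⊆ (Nat.card G).primeFactors) :
    (Nat.card (kClosure 2 G)).primeFactors ⊆ (Nat.card G).primeFactors := by
  have hW : G ≤ centralizer ((center G).map G.subtype : Set (Perm Ω)) := by
    rintro g hg _ ⟨z, hz, rfl⟩
    exact congrArg Subtype.val (mem_center_iff.mp hz ⟨g, hg⟩).symm
  refine (primeFactors_card_kClosure_two_subset_union hW).trans (Finset.union_subset hΩ ?_)
  exact Nat.primeFactors_mono (card_dvd_of_le (map_subtype_le _)) Nat.card_pos.ne'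

section Coprime

variable {N₁ N₂ : Subgroup G} [N₁.Normal] [N₂.Normal]

theorem injective_orbitsHom_prod_of_coprime (hcop : (Nat.card N₁).Coprime (Nat.card N₂)) :
    Function.Injective ((orbitsHom (le_normalizer_map_subtype N₁)).prod
      (orbitsHom (le_normalizer_map_subtype N₂))) := by
  refine injective_orbitsHom_prod _ _ ?_ ?_
  · rintro _ ⟨u, hu, rfl⟩ _ ⟨v, hv, rfl⟩
    exact (commute_of_normal_of_disjoint _ _ inferInstance inferInstance
      (disjoint_of_coprime_natCard hcop) u v hu hv).map _
  · rwa [card_map_of_injective G.subtype_injective, card_map_of_injective G.subtype_injective]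

theorem isNilpotent_kClosure_two_of_coprime (hcop : (Nat.card N₁).Coprime (Nat.card N₂))
    [Group.IsNilpotent (kClosure 2 (orbitGroup (le_normalizer_map_subtype N₁)))]
    [Group.IsNilpotent (kClosure 2 (orbitGroup (le_normalizer_map_subtype N₂)))] :
    Group.IsNilpotent (kClosure 2 G) :=
  Group.nilpotent_of_mulEquiv
    (MonoidHom.ofInjective (injective_orbitsHom_prod_of_coprime hcop)).symm

theorem primeFactors_card_kClosure_two_subset_of_coprime [Finite Ω]
    (hcop : (Nat.card N₁).Coprime (Nat.card N₂)) :
    (Nat.card (kClosure 2 G)).primeFactors ⊆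
      (Nat.card (kClosure 2 (orbitGroup (le_normalizer_map_subtype N₁)))).primeFactors ∪
        (Nat.card (kClosure 2 (orbitGroup (le_normalizer_map_subtype N₂)))).primeFactors := by
  have hdvd := card_dvd_of_injective _ (injective_orbitsHom_prod_of_coprime hcop)
  rw [Nat.card_prod] at hdvd
  rw [← Nat.primeFactors_mul Nat.card_pos.ne' Nat.card_pos.ne']
  exact Nat.primeFactors_mono hdvd (mul_ne_zero Nat.card_pos.ne' Nat.card_pos.ne')

end Coprime

end Reductions

theorem kClosure_two_isNilpotent_and_primeFactors_subset [Finite Ω]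
    (G : Subgroup (Perm Ω)) [Group.IsNilpotent G] :
    Group.IsNilpotent (kClosure 2 G) ∧
      (Nat.card (kClosure 2 G)).primeFactors ⊆ (Nat.card G).primeFactors := by
  induction hn : Nat.card Ω using Nat.strong_induction_on generalizing Ω with
  | _ n ih =>
  have ih_orbits : ∀ (N : Subgroup G) [N.Normal], N ≠ ⊥ →
      Group.IsNilpotent (kClosure 2 (orbitGroup (le_normalizer_map_subtype N))) ∧
        (Nat.card (kClosure 2 (orbitGroup (le_normalizer_map_subtype N)))).primeFactors ⊆
          (Nat.card G).primeFactors := by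
    intro N _ hN
    have : Group.IsNilpotent (orbitGroup (le_normalizer_map_subtype N)) :=
      Group.nilpotent_of_surjective _ (MonoidHom.rangeRestrict_surjective _)
    have hlt := card_orbitRel_quotient_lt
      ((map_eq_bot_iff_of_injective _ G.subtype_injective).not.mpr hN)
    obtain ⟨hnil, hπ⟩ := ih _ (hn ▸ hlt) (orbitGroup (le_normalizer_map_subtype N)) rfl
    exact ⟨hnil, hπ.trans (Nat.primeFactors_mono (card_range_dvd _) Nat.card_pos.ne')⟩
  rcases eq_or_ne G ⊥ with rfl | hG
  · rw [kClosure_bot two_pos]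
    exact ⟨inferInstance, subset_rfl⟩
  obtain ⟨p, hp⟩ := Nat.nonempty_primeFactors.mpr ((one_lt_card_iff_ne_bot G).mpr hG)
  have hp' := Nat.prime_of_mem_primeFactors hp
  have := Fact.mk hp'
  by_cases hpG : (Nat.card G).primeFactors ⊆ p.primeFactors
  · have : Nontrivial G := (nontrivial_iff_ne_bot G).mpr hG
    have hZ : center G ≠ ⊥ := (nontrivial_iff_ne_bot _).mp
      ((isPGroup_iff_primeFactors_card_subset (NeZero.ne p)).mpr hpG).center_nontrivial
    have hπ := primeFactors_card_kClosure_two_subset_of_center (ih_orbits _ hZ).2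
    have hπp : IsPGroup p (kClosure 2 G) :=
      (isPGroup_iff_primeFactors_card_subset (NeZero.ne p)).mpr (hπ.trans hpG)
    exact ⟨hπp.isNilpotent, hπ⟩
  obtain ⟨q, hq, hqp⟩ := Finset.not_subset.mp hpG
  have := Fact.mk (Nat.prime_of_mem_primeFactors hq)
  have hpq : p ≠ q := by
    simpa [eq_comm, hp'.primeFactors] using hqp
  let P : Sylow p G := default
  let Q : Sylow q G := default
  have hcop := IsPGroup.coprime_card_of_ne p q hpq _ _ P.2 Q.2
  obtain ⟨_, hπP⟩ := ih_orbits P (P.ne_bot_of_dvd_card (Nat.dvd_of_mem_primeFactors hp))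
  obtain ⟨_, hπQ⟩ := ih_orbits Q (Q.ne_bot_of_dvd_card (Nat.dvd_of_mem_primeFactors hq))
  exact ⟨isNilpotent_kClosure_two_of_coprime hcop,
    (primeFactors_card_kClosure_two_subset_of_coprime hcop).trans (Finset.union_subset hπP hπQ)⟩

end

/-- The `k`-closure (`k ≥ 2`) of a finite nilpotent permutation group is nilpotent and
has the same prime divisors as the group itself. -/
theorem kClosure_nilpotent_same_primes {Ω : Type*} [Finite Ω]
    (G : Subgroup (Equiv.Perm Ω)) (hnil : Group.IsNilpotent ↥G) (k : ℕ) (hk : 2 ≤ k) :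
    Group.IsNilpotent ↥(kClosure k G) ∧
      (Nat.card ↥(kClosure k G)).primeFactors = (Nat.card ↥G).primeFactors := by
  obtain ⟨hnil₂, hπ₂⟩ := kClosure_two_isNilpotent_and_primeFactors_subset G
  have hle : kClosure k G ≤ kClosure 2 G := kClosure_antitone G hk
  refine ⟨Group.nilpotent_of_mulEquiv (subgroupOfEquivOfLe hle), ?_⟩
  exact ((Nat.primeFactors_mono (card_dvd_of_le hle) Nat.card_pos.ne').trans hπ₂).antisymm
    (Nat.primeFactors_mono (card_dvd_of_le (le_kClosure k G)) Nat.card_pos.ne')
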